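/- arXiv:2408.08157 — 10 statements merged into one kernel-verified Lean document; each statement's English description precedes it below -/
import Mathlib

section
/- In a GL-quantale $(L,\circledast)$, if $\alpha\le\gamma$ and $\beta\le\gamma$, then $\alpha\circledast(\gamma\rightarrow\beta) = \beta\circledast(\gamma\rightarrow\alpha)$. -/
theorem stmt2_general
    (L : Type*) [CompleteLattice L]
    (mul imp : L → L → L)
    (hcomm : ∀ a b : L, mul a b = mul b a)
    (hassoc : ∀ a b c : L, mul (mul a b) c = mul a (mul b c))
    (hdiv : ∀ a b : L, a ⊓ b = mul a (imp a b))
    (α β γ : L) (hα : α ≤ γ) (hβ : β ≤ γ) :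
    mul α (imp γ β) = mul β (imp γ α) := by
  have hγα : mul γ (imp γ α) = α := by rw [← hdiv, inf_eq_right.mpr hα]
  have hγβ : mul γ (imp γ β) = β := by rw [← hdiv, inf_eq_right.mpr hβ]
  calc mul α (imp γ β) = mul (mul γ (imp γ α)) (imp γ β) := by rw [hγα]
    _ = mul (mul γ (imp γ β)) (imp γ α) := by rw [hassoc, hassoc, hcomm (imp γ α)]
    _ = mul β (imp γ α) := by rw [hγβ]

theorem stmt2
    (L : Type*) [CompleteLattice L]
    (mul imp : L → L → L)
    (hcomm : ∀ a b : L, mul a b = mul b a)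
    (hassoc : ∀ a b c : L, mul (mul a b) c = mul a (mul b c))
    (hunit : ∀ a : L, mul a ⊤ = a)
    (hdist : ∀ (a : L) (s : Set L), mul a (sSup s) = ⨆ b ∈ s, mul a b)
    (himp : ∀ a b : L, imp a b = sSup {c : L | mul a c ≤ b})
    (hdiv : ∀ a b : L, a ⊓ b = mul a (imp a b))
    (α β γ : L) (hα : α ≤ γ) (hβ : β ≤ γ) :
    mul α (imp γ β) = mul β (imp γ α) :=
  stmt2_general L mul imp hcomm hassoc hdiv α β γ hα hβ
end

section
/- In a GL-quantale $(L,\circledast)$, if $\beta\le\gamma$ then $\gamma\circledast(\beta\rightarrow\alpha) = \gamma\wedge((\gamma\rightarrow\beta)\rightarrow\alpha)$ for all $\alpha\in L$. -/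
/-!
Write `x := (γ → β) → α`. Since `β ≤ γ`, divisibility gives `γ ⊛ (γ → β) = β`, and this one identity
drives both inequalities. On one side, `(γ → β) ⊛ γ ⊛ (β → α) = β ⊛ (β → α) ≤ α`, so
`γ ⊛ (β → α) ≤ x`. On the other, `β ⊛ (γ → x) = (γ → β) ⊛ (γ ⊓ x) ≤ (γ → β) ⊛ x ≤ α`, so
`γ → x ≤ β → α`, and therefore `γ ⊓ x = γ ⊛ (γ → x) ≤ γ ⊛ (β → α)`.
-/

namespace ResiduatedLattice

variable {L : Type*} [CompleteLattice L] {mul imp : L → L → L}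

theorem le_imp_of_mul_le (himp : ∀ a b : L, imp a b = sSup {c : L | mul a c ≤ b})
    {a b c : L} (h : mul a c ≤ b) : c ≤ imp a b :=
  himp a b ▸ le_sSup h

theorem mul_imp_le (hdist : ∀ (a : L) (s : Set L), mul a (sSup s) = ⨆ b ∈ s, mul a b)
    (himp : ∀ a b : L, imp a b = sSup {c : L | mul a c ≤ b}) (a b : L) :
    mul a (imp a b) ≤ b := by
  rw [himp, hdist]
  exact iSup₂_le fun _ hc => hc

theorem mul_le_mul_of_le_right (hdist : ∀ (a : L) (s : Set L), mul a (sSup s) = ⨆ b ∈ s, mul a b)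
    (a : L) {c d : L} (hcd : c ≤ d) : mul a c ≤ mul a d := by
  have hpair := hdist a {c, d}
  rw [sSup_pair, sup_eq_right.2 hcd] at hpair
  rw [hpair]
  exact le_iSup₂_of_le c (Set.mem_insert c {d}) le_rfl

theorem mul_imp_of_le (hdiv : ∀ a b : L, a ⊓ b = mul a (imp a b)) {a b : L} (h : b ≤ a) :
    mul a (imp a b) = b := by
  rw [← hdiv, inf_eq_right.2 h]

theorem mul_top (himp : ∀ a b : L, imp a b = sSup {c : L | mul a c ≤ b})
    (hdiv : ∀ a b : L, a ⊓ b = mul a (imp a b)) (a : L) : mul a ⊤ = a := by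
  have himp_top : imp a ⊤ = ⊤ := by simp [himp]
  rw [← himp_top, ← hdiv, inf_top_eq]

theorem mul_le_self (hdist : ∀ (a : L) (s : Set L), mul a (sSup s) = ⨆ b ∈ s, mul a b)
    (himp : ∀ a b : L, imp a b = sSup {c : L | mul a c ≤ b})
    (hdiv : ∀ a b : L, a ⊓ b = mul a (imp a b)) (a c : L) : mul a c ≤ a :=
  (mul_le_mul_of_le_right hdist a le_top).trans_eq (mul_top himp hdiv a)

theorem imp_mul_mul_eq_of_le (hcomm : ∀ a b : L, mul a b = mul b a)
    (hassoc : ∀ a b c : L, mul (mul a b) c = mul a (mul b c))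
    (hdiv : ∀ a b : L, a ⊓ b = mul a (imp a b)) {β γ : L} (h : β ≤ γ) (c : L) :
    mul (imp γ β) (mul γ c) = mul β c := by
  rw [← hassoc, hcomm (imp γ β), mul_imp_of_le hdiv h]

theorem mul_imp_le_imp_imp_of_le (hcomm : ∀ a b : L, mul a b = mul b a)
    (hassoc : ∀ a b c : L, mul (mul a b) c = mul a (mul b c))
    (hdist : ∀ (a : L) (s : Set L), mul a (sSup s) = ⨆ b ∈ s, mul a b)
    (himp : ∀ a b : L, imp a b = sSup {c : L | mul a c ≤ b})
    (hdiv : ∀ a b : L, a ⊓ b = mul a (imp a b))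
    (α : L) {β γ : L} (h : β ≤ γ) :
    mul γ (imp β α) ≤ imp (imp γ β) α := by
  apply le_imp_of_mul_le himp
  rw [imp_mul_mul_eq_of_le hcomm hassoc hdiv h]
  exact mul_imp_le hdist himp β α

theorem imp_imp_imp_le_imp_of_le (hcomm : ∀ a b : L, mul a b = mul b a)
    (hassoc : ∀ a b c : L, mul (mul a b) c = mul a (mul b c))
    (hdist : ∀ (a : L) (s : Set L), mul a (sSup s) = ⨆ b ∈ s, mul a b)
    (himp : ∀ a b : L, imp a b = sSup {c : L | mul a c ≤ b})
    (hdiv : ∀ a b : L, a ⊓ b = mul a (imp a b))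
    (α : L) {β γ : L} (h : β ≤ γ) :
    imp γ (imp (imp γ β) α) ≤ imp β α := by
  apply le_imp_of_mul_le himp
  calc mul β (imp γ (imp (imp γ β) α))
      = mul (imp γ β) (γ ⊓ imp (imp γ β) α) := by
        rw [hdiv, imp_mul_mul_eq_of_le hcomm hassoc hdiv h]
    _ ≤ mul (imp γ β) (imp (imp γ β) α) := mul_le_mul_of_le_right hdist _ inf_le_right
    _ ≤ α := mul_imp_le hdist himp _ α

end ResiduatedLattice

open ResiduatedLattice in
theorem stmt3_general
    (L : Type*) [CompleteLattice L]
    (mul imp : L → L → L)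
    (hcomm : ∀ a b : L, mul a b = mul b a)
    (hassoc : ∀ a b c : L, mul (mul a b) c = mul a (mul b c))
    (hdist : ∀ (a : L) (s : Set L), mul a (sSup s) = ⨆ b ∈ s, mul a b)
    (himp : ∀ a b : L, imp a b = sSup {c : L | mul a c ≤ b})
    (hdiv : ∀ a b : L, a ⊓ b = mul a (imp a b))
    (α β γ : L) (h : β ≤ γ) :
    mul γ (imp β α) = γ ⊓ imp (imp γ β) α := by
  apply le_antisymm
  · exact le_inf (mul_le_self hdist himp hdiv γ _)
      (mul_imp_le_imp_imp_of_le hcomm hassoc hdist himp hdiv α h)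
  · calc γ ⊓ imp (imp γ β) α = mul γ (imp γ (imp (imp γ β) α)) := hdiv γ _
      _ ≤ mul γ (imp β α) :=
        mul_le_mul_of_le_right hdist γ (imp_imp_imp_le_imp_of_le hcomm hassoc hdist himp hdiv α h)

theorem stmt3
    (L : Type*) [CompleteLattice L]
    (mul imp : L → L → L)
    (hcomm : ∀ a b : L, mul a b = mul b a)
    (hassoc : ∀ a b c : L, mul (mul a b) c = mul a (mul b c))
    (hunit : ∀ a : L, mul a ⊤ = a)
    (hdist : ∀ (a : L) (s : Set L), mul a (sSup s) = ⨆ b ∈ s, mul a b)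
    (himp : ∀ a b : L, imp a b = sSup {c : L | mul a c ≤ b})
    (hdiv : ∀ a b : L, a ⊓ b = mul a (imp a b))
    (α β γ : L) (h : β ≤ γ) :
    mul γ (imp β α) = γ ⊓ imp (imp γ β) α :=
  stmt3_general L mul imp hcomm hassoc hdist himp hdiv α β γ h
end

section
/- Let $L$ be a GL-quantale, $\mathbb{U}$ an $L$-universe on $X$, and $\mathbb{I}(M,Q)=\bigvee_{d\in X}\big(M(d)\circledast(\mathbb{U}(d)\rightarrow Q(d))\big)$ for $M,Q\in P(\mathbb{U})$. Then $\mathbb{I}$ is symmetric: $\mathbb{I}(V,W) = \mathbb{I}(W,V)$ for all $V,W\in P(\mathbb{U})$. -/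
section Divisible

variable {L : Type*} [SemilatticeInf L] {mul imp : L → L → L}

theorem mul_imp_eq_of_le (hdiv : ∀ a b : L, a ⊓ b = mul a (imp a b)) {a c : L} (ha : a ≤ c) :
    mul c (imp c a) = a := by
  rw [← hdiv, inf_eq_right.mpr ha]

theorem mul_imp_comm_of_le (hcomm : ∀ a b : L, mul a b = mul b a)
    (hassoc : ∀ a b c : L, mul (mul a b) c = mul a (mul b c))
    (hdiv : ∀ a b : L, a ⊓ b = mul a (imp a b)) {a b c : L} (ha : a ≤ c) (hb : b ≤ c) :
    mul a (imp c b) = mul b (imp c a) :=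
  calc mul a (imp c b) = mul (mul c (imp c a)) (imp c b) := by rw [mul_imp_eq_of_le hdiv ha]
    _ = mul (mul c (imp c b)) (imp c a) := by rw [hassoc, hassoc, hcomm (imp c a)]
    _ = mul b (imp c a) := by rw [mul_imp_eq_of_le hdiv hb]

end Divisible

theorem stmt5_general
    (L : Type*) [CompleteLattice L]
    (mul imp : L → L → L)
    (hcomm : ∀ a b : L, mul a b = mul b a)
    (hassoc : ∀ a b c : L, mul (mul a b) c = mul a (mul b c))
    (hdiv : ∀ a b : L, a ⊓ b = mul a (imp a b))
    (X : Type*) (U : X → L)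
    (V W : X → L) (hV : ∀ x, V x ≤ U x) (hW : ∀ x, W x ≤ U x) :
    (⨆ d, mul (V d) (imp (U d) (W d))) = ⨆ d, mul (W d) (imp (U d) (V d)) :=
  iSup_congr fun d => mul_imp_comm_of_le hcomm hassoc hdiv (hV d) (hW d)

theorem stmt5
    (L : Type*) [CompleteLattice L]
    (mul imp : L → L → L)
    (hcomm : ∀ a b : L, mul a b = mul b a)
    (hassoc : ∀ a b c : L, mul (mul a b) c = mul a (mul b c))
    (hunit : ∀ a : L, mul a ⊤ = a)
    (hdist : ∀ (a : L) (s : Set L), mul a (sSup s) = ⨆ b ∈ s, mul a b)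
    (himp : ∀ a b : L, imp a b = sSup {c : L | mul a c ≤ b})
    (hdiv : ∀ a b : L, a ⊓ b = mul a (imp a b))
    (X : Type*) (U : X → L)
    (V W : X → L) (hV : ∀ x, V x ≤ U x) (hW : ∀ x, W x ≤ U x) :
    (⨆ d, mul (V d) (imp (U d) (W d))) = ⨆ d, mul (W d) (imp (U d) (V d)) :=
  stmt5_general L mul imp hcomm hassoc hdiv X U V W hV hW
end

section
/- Let $L$ be a GL-quantale, $\mathbb{U}$ an $L$-universe on $X$, and $\mathbb{I}(M,Q)=\bigvee_{d\in X}\big(M(d)\circledast(\mathbb{U}(d)\rightarrow Q(d))\big)$. Let $W,V\in P(\mathbb{U})$ and $\alpha,\beta\in L$ with $\beta\le\alpha$ and $\bigvee_{u\in X}V(u)\le\alpha$. Then $\mathbb{I}\big(W, \beta\circledast(\alpha\rightarrow V)\big) = \beta\circledast\big(\alpha\rightarrow\mathbb{I}(W,V)\big)$, where $\beta\circledast(\alpha\rightarrow V)$ denotes the pointwise operation $x\mapsto \beta\circledast(\alpha\rightarrow V(x))$. -/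
/-!
In a GL-quantale divisibility gives `w ⊛ (u → v) = v ⊛ (u → w)` whenever `w, v ≤ u`
(both sides equal `(u ⊛ (u → w)) ⊛ (u → v)`). Taking `u = α` and `w = β`, the map
`x ↦ β ⊛ (α → x)` is multiplication by the constant `α → β` on elements below `α`.
The same symmetry lets a constant factor pass through each summand `W d ⊛ (𝕌 d → ·)` of `𝕀`,
and multiplication distributes over joins, so the two sides agree.
-/

namespace GLQuantale

variable {L : Type*} [CompleteLattice L] {mul imp : L → L → L}

theorem mul_le_mul_left
    (hdist : ∀ (a : L) (s : Set L), mul a (sSup s) = ⨆ b ∈ s, mul a b)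
    (a : L) {b c : L} (hbc : b ≤ c) : mul a b ≤ mul a c := by
  have hpair : sSup {b, c} = c := by simp [hbc]
  calc mul a b ≤ ⨆ x ∈ ({b, c} : Set L), mul a x := le_iSup₂_of_le b (by simp) le_rfl
    _ = mul a c := by rw [← hdist, hpair]

theorem mul_le_mul_right (hcomm : ∀ a b : L, mul a b = mul b a)
    (hdist : ∀ (a : L) (s : Set L), mul a (sSup s) = ⨆ b ∈ s, mul a b)
    (a : L) {b c : L} (hbc : b ≤ c) : mul b a ≤ mul c a := by
  rw [hcomm b, hcomm c]
  exact mul_le_mul_left hdist a hbc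

theorem mul_iSup {ι : Sort*}
    (hdist : ∀ (a : L) (s : Set L), mul a (sSup s) = ⨆ b ∈ s, mul a b)
    (a : L) (f : ι → L) : mul a (⨆ i, f i) = ⨆ i, mul a (f i) := by
  rw [iSup, hdist, iSup_range]

theorem mul_le_right (hcomm : ∀ a b : L, mul a b = mul b a)
    (hdist : ∀ (a : L) (s : Set L), mul a (sSup s) = ⨆ b ∈ s, mul a b)
    (hunit : ∀ a : L, mul a ⊤ = a) (a b : L) : mul a b ≤ b := by
  calc mul a b ≤ mul ⊤ b := mul_le_mul_right hcomm hdist b le_top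
    _ = b := by rw [hcomm, hunit]

theorem mul_imp_cancel_of_le (hdiv : ∀ a b : L, a ⊓ b = mul a (imp a b))
    {a x : L} (hx : x ≤ a) : mul a (imp a x) = x := by
  rw [← hdiv, inf_eq_right.mpr hx]

theorem mul_imp_le (hcomm : ∀ a b : L, mul a b = mul b a)
    (hdist : ∀ (a : L) (s : Set L), mul a (sSup s) = ⨆ b ∈ s, mul a b)
    (hdiv : ∀ a b : L, a ⊓ b = mul a (imp a b))
    {u w : L} (v : L) (hw : w ≤ u) : mul w (imp u v) ≤ v :=
  calc mul w (imp u v) ≤ mul u (imp u v) := mul_le_mul_right hcomm hdist _ hw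
    _ = u ⊓ v := (hdiv u v).symm
    _ ≤ v := inf_le_right

theorem mul_imp_comm (hcomm : ∀ a b : L, mul a b = mul b a)
    (hassoc : ∀ a b c : L, mul (mul a b) c = mul a (mul b c))
    (hdiv : ∀ a b : L, a ⊓ b = mul a (imp a b))
    {u w v : L} (hw : w ≤ u) (hv : v ≤ u) : mul w (imp u v) = mul v (imp u w) :=
  calc mul w (imp u v) = mul (mul u (imp u w)) (imp u v) := by
        rw [mul_imp_cancel_of_le hdiv hw]
    _ = mul (mul u (imp u v)) (imp u w) := by rw [hassoc, hassoc, hcomm (imp u w)]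
    _ = mul v (imp u w) := by rw [mul_imp_cancel_of_le hdiv hv]

theorem mul_imp_eq_imp_mul (hcomm : ∀ a b : L, mul a b = mul b a)
    (hassoc : ∀ a b c : L, mul (mul a b) c = mul a (mul b c))
    (hdiv : ∀ a b : L, a ⊓ b = mul a (imp a b))
    {α β x : L} (hβα : β ≤ α) (hx : x ≤ α) : mul β (imp α x) = mul (imp α β) x := by
  rw [mul_imp_comm hcomm hassoc hdiv hβα hx, hcomm]

theorem mul_imp_mul_eq_mul_mul_imp (hcomm : ∀ a b : L, mul a b = mul b a)
    (hassoc : ∀ a b c : L, mul (mul a b) c = mul a (mul b c))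
    (hdiv : ∀ a b : L, a ⊓ b = mul a (imp a b))
    {u w v : L} (c : L) (hw : w ≤ u) (hv : v ≤ u) (hcv : mul c v ≤ u) :
    mul w (imp u (mul c v)) = mul c (mul w (imp u v)) := by
  rw [mul_imp_comm hcomm hassoc hdiv hw hcv, mul_imp_comm hcomm hassoc hdiv hw hv, hassoc]

end GLQuantale

theorem stmt6_general
    (L : Type*) [CompleteLattice L]
    (mul imp : L → L → L)
    (hcomm : ∀ a b : L, mul a b = mul b a)
    (hassoc : ∀ a b c : L, mul (mul a b) c = mul a (mul b c))
    (hunit : ∀ a : L, mul a ⊤ = a)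
    (hdist : ∀ (a : L) (s : Set L), mul a (sSup s) = ⨆ b ∈ s, mul a b)
    (hdiv : ∀ a b : L, a ⊓ b = mul a (imp a b))
    (X : Type*) (U : X → L)
    (W V : X → L) (hW : ∀ x, W x ≤ U x) (hV : ∀ x, V x ≤ U x)
    (α β : L) (hβα : β ≤ α) (hVα : (⨆ u, V u) ≤ α) :
    (⨆ d, mul (W d) (imp (U d) (mul β (imp α (V d)))))
      = mul β (imp α (⨆ d, mul (W d) (imp (U d) (V d)))) := by
  have hscale : ∀ x ≤ α, mul β (imp α x) = mul (imp α β) x :=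
    fun _ hx => GLQuantale.mul_imp_eq_imp_mul hcomm hassoc hdiv hβα hx
  have hVα' (d : X) : V d ≤ α := (le_iSup V d).trans hVα
  have hterm (d : X) : mul (W d) (imp (U d) (mul β (imp α (V d))))
      = mul (imp α β) (mul (W d) (imp (U d) (V d))) := by
    rw [hscale _ (hVα' d)]
    exact GLQuantale.mul_imp_mul_eq_mul_mul_imp hcomm hassoc hdiv _ (hW d) (hV d)
      ((GLQuantale.mul_le_right hcomm hdist hunit _ _).trans (hV d))
  have hsum : (⨆ d, mul (W d) (imp (U d) (V d))) ≤ α :=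
    iSup_le fun d => (GLQuantale.mul_imp_le hcomm hdist hdiv _ (hW d)).trans (hVα' d)
  rw [iSup_congr hterm, ← GLQuantale.mul_iSup hdist, hscale _ hsum]

theorem stmt6
    (L : Type*) [CompleteLattice L]
    (mul imp : L → L → L)
    (hcomm : ∀ a b : L, mul a b = mul b a)
    (hassoc : ∀ a b c : L, mul (mul a b) c = mul a (mul b c))
    (hunit : ∀ a : L, mul a ⊤ = a)
    (hdist : ∀ (a : L) (s : Set L), mul a (sSup s) = ⨆ b ∈ s, mul a b)
    (himp : ∀ a b : L, imp a b = sSup {c : L | mul a c ≤ b})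
    (hdiv : ∀ a b : L, a ⊓ b = mul a (imp a b))
    (X : Type*) (U : X → L)
    (W V : X → L) (hW : ∀ x, W x ≤ U x) (hV : ∀ x, V x ≤ U x)
    (α β : L) (hβα : β ≤ α) (hVα : (⨆ u, V u) ≤ α) :
    (⨆ d, mul (W d) (imp (U d) (mul β (imp α (V d)))))
      = mul β (imp α (⨆ d, mul (W d) (imp (U d) (V d)))) :=
  stmt6_general L mul imp hcomm hassoc hunit hdist hdiv X U W V hW hV α β hβα hVα
end

section
/- Let $L$ be a GL-quantale, $\mathbb{U}$ an $L$-universe on $X$, and $\mathbb{I}(M,Q)=\bigvee_{d\in X}\big(M(d)\circledast(\mathbb{U}(d)\rightarrow Q(d))\big)$. Then $\mathbb{I}$ preserves arbitrary joins in its second argument: for $W\in P(\mathbb{U})$ and a family $V_i\in P(\mathbb{U})$ ($i\in I$), $\mathbb{I}\big(W, \bigvee_i V_i\big) = \bigvee_i \mathbb{I}(W, V_i)$. -/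
section Divisible

variable {L : Type*} {mul imp : L → L → L}

theorem mul_iSup_of_mul_sSup [CompleteLattice L]
    (hdist : ∀ (a : L) (s : Set L), mul a (sSup s) = ⨆ b ∈ s, mul a b)
    {ι : Sort*} (a : L) (f : ι → L) :
    mul a (⨆ i, f i) = ⨆ i, mul a (f i) := by
  rw [← sSup_range, hdist, iSup_range]

/-- Divisibility writes both `w` and `q` as `u ⊛ (u → ·)`, so the two residuals can trade places. -/
theorem mul_imp_comm_of_divisible [SemilatticeInf L]
    (hcomm : ∀ a b : L, mul a b = mul b a)
    (hassoc : ∀ a b c : L, mul (mul a b) c = mul a (mul b c))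
    (hdiv : ∀ a b : L, a ⊓ b = mul a (imp a b))
    {u w q : L} (hw : w ≤ u) (hq : q ≤ u) :
    mul w (imp u q) = mul (imp u w) q := by
  have hw' : mul u (imp u w) = w := by rw [← hdiv, inf_eq_right.mpr hw]
  have hq' : mul u (imp u q) = q := by rw [← hdiv, inf_eq_right.mpr hq]
  calc mul w (imp u q) = mul (mul u (imp u w)) (imp u q) := by rw [hw']
    _ = mul (imp u w) (mul u (imp u q)) := by
        rw [hassoc, hcomm u, hassoc, hcomm (imp u q)]
    _ = mul (imp u w) q := by rw [hq']

end Divisible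

theorem stmt7_general
    (L : Type*) [CompleteLattice L]
    (mul imp : L → L → L)
    (hcomm : ∀ a b : L, mul a b = mul b a)
    (hassoc : ∀ a b c : L, mul (mul a b) c = mul a (mul b c))
    (hdist : ∀ (a : L) (s : Set L), mul a (sSup s) = ⨆ b ∈ s, mul a b)
    (hdiv : ∀ a b : L, a ⊓ b = mul a (imp a b))
    (X : Type*) (U : X → L)
    (W : X → L) (hW : ∀ x, W x ≤ U x)
    {ι : Type*} (V : ι → X → L) (hV : ∀ i x, V i x ≤ U x) :
    (⨆ d, mul (W d) (imp (U d) (⨆ i, V i d)))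
      = ⨆ i, ⨆ d, mul (W d) (imp (U d) (V i d)) := by
  have swap {u w q : L} : w ≤ u → q ≤ u → mul w (imp u q) = mul (imp u w) q :=
    mul_imp_comm_of_divisible hcomm hassoc hdiv
  calc (⨆ d, mul (W d) (imp (U d) (⨆ i, V i d)))
      = ⨆ d, mul (imp (U d) (W d)) (⨆ i, V i d) :=
        iSup_congr fun d => swap (hW d) (iSup_le fun i => hV i d)
    _ = ⨆ d, ⨆ i, mul (imp (U d) (W d)) (V i d) :=
        iSup_congr fun d => mul_iSup_of_mul_sSup hdist _ _
    _ = ⨆ d, ⨆ i, mul (W d) (imp (U d) (V i d)) :=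
        iSup_congr fun d => iSup_congr fun i => (swap (hW d) (hV i d)).symm
    _ = ⨆ i, ⨆ d, mul (W d) (imp (U d) (V i d)) := iSup_comm

theorem stmt7
    (L : Type*) [CompleteLattice L]
    (mul imp : L → L → L)
    (hcomm : ∀ a b : L, mul a b = mul b a)
    (hassoc : ∀ a b c : L, mul (mul a b) c = mul a (mul b c))
    (hunit : ∀ a : L, mul a ⊤ = a)
    (hdist : ∀ (a : L) (s : Set L), mul a (sSup s) = ⨆ b ∈ s, mul a b)
    (himp : ∀ a b : L, imp a b = sSup {c : L | mul a c ≤ b})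
    (hdiv : ∀ a b : L, a ⊓ b = mul a (imp a b))
    (X : Type*) (U : X → L)
    (W : X → L) (hW : ∀ x, W x ≤ U x)
    {ι : Type*} (V : ι → X → L) (hV : ∀ i x, V i x ≤ U x) :
    (⨆ d, mul (W d) (imp (U d) (⨆ i, V i d)))
      = ⨆ i, ⨆ d, mul (W d) (imp (U d) (V i d)) :=
  stmt7_general L mul imp hcomm hassoc hdist hdiv X U W hW V hV
end

section
/- Let $L$ be a GL-quantale and $\mathbb{U}$ an $L$-universe on $X$. Then every $Q\in P(\mathbb{U})$ decomposes as $Q = \bigvee_{b\in X}\big(Q(b)\circledast(\mathbb{U}(b)\rightarrow\mathbb{U}_{\{b\}})\big)$, where $\mathbb{U}_{\{b\}}(x)=\mathbb{U}(x)$ if $x=b$ and $0$ otherwise, and joins and the operations on $L$-subsets are pointwise. -/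
/-!
For `b ≠ x` the `b`-th term is `Q b ⊛ (U b → ⊥) ≤ U b ⊛ (U b → ⊥) = U b ⊓ ⊥ = ⊥` by
divisibility, while the `x`-th term is `Q x ⊛ (U x → U x) = Q x ⊛ ⊤ = Q x`; so the join
collapses to `Q x`.
-/

section Quantale

variable {L : Type*} [CompleteLattice L] {mul imp : L → L → L}

theorem monotone_mul_of_map_sSup (hdist : ∀ (a : L) (s : Set L), mul a (sSup s) = ⨆ b ∈ s, mul a b)
    (c : L) : Monotone (mul c) := by
  intro a b hab
  have hpair : mul c b = ⨆ d ∈ ({a, b} : Set L), mul c d := by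
    rw [← hdist, sSup_pair, sup_eq_right.2 hab]
  rw [hpair]
  exact le_biSup (mul c) (Set.mem_insert a {b})

theorem imp_self_eq_top (hunit : ∀ a : L, mul a ⊤ = a)
    (himp : ∀ a b : L, imp a b = sSup {c : L | mul a c ≤ b}) (a : L) : imp a a = ⊤ :=
  top_unique <| (himp a a).symm ▸ le_sSup (by simp [hunit])

theorem mul_imp_bot_eq_bot (hdiv : ∀ a b : L, a ⊓ b = mul a (imp a b)) (a : L) :
    mul a (imp a ⊥) = ⊥ := by
  rw [← hdiv, inf_bot_eq]

end Quantale

theorem stmt8_general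
    (L : Type*) [CompleteLattice L]
    (mul imp : L → L → L)
    (hcomm : ∀ a b : L, mul a b = mul b a)
    (hunit : ∀ a : L, mul a ⊤ = a)
    (hdist : ∀ (a : L) (s : Set L), mul a (sSup s) = ⨆ b ∈ s, mul a b)
    (himp : ∀ a b : L, imp a b = sSup {c : L | mul a c ≤ b})
    (hdiv : ∀ a b : L, a ⊓ b = mul a (imp a b))
    (X : Type*) [DecidableEq X] (U : X → L)
    (Q : X → L) (hQ : ∀ x, Q x ≤ U x) (x : X) :
    Q x = ⨆ b, mul (Q b) (imp (U b) (if x = b then U x else ⊥)) := by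
  have hterm : ∀ b, mul (Q b) (imp (U b) (if x = b then U x else ⊥)) = if x = b then Q x else ⊥ := by
    intro b
    split_ifs with hxb
    · rw [hxb, imp_self_eq_top hunit himp, hunit]
    · refine le_bot_iff.1 ?_
      calc mul (Q b) (imp (U b) ⊥)
          = mul (imp (U b) ⊥) (Q b) := hcomm _ _
        _ ≤ mul (imp (U b) ⊥) (U b) := monotone_mul_of_map_sSup hdist _ (hQ b)
        _ = ⊥ := by rw [hcomm, mul_imp_bot_eq_bot hdiv]
  simp only [hterm, iSup_ite, iSup_iSup_eq_right, iSup_bot, sup_bot_eq]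

theorem stmt8
    (L : Type*) [CompleteLattice L]
    (mul imp : L → L → L)
    (hcomm : ∀ a b : L, mul a b = mul b a)
    (hassoc : ∀ a b c : L, mul (mul a b) c = mul a (mul b c))
    (hunit : ∀ a : L, mul a ⊤ = a)
    (hdist : ∀ (a : L) (s : Set L), mul a (sSup s) = ⨆ b ∈ s, mul a b)
    (himp : ∀ a b : L, imp a b = sSup {c : L | mul a c ≤ b})
    (hdiv : ∀ a b : L, a ⊓ b = mul a (imp a b))
    (X : Type*) [DecidableEq X] (U : X → L)
    (Q : X → L) (hQ : ∀ x, Q x ≤ U x) (x : X) :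
    Q x = ⨆ b, mul (Q b) (imp (U b) (if x = b then U x else ⊥)) :=
  stmt8_general L mul imp hcomm hunit hdist himp hdiv X U Q hQ x
end

section
/- Let $L$ be a GL-quantale, $\mathbb{U}$ an $L$-universe on $X$, and $\mathbb{R}$ a symmetric $L$-valued relation on $\mathbb{U}$ (i.e. $\mathbb{R}(a,d)\le\mathbb{U}(a)\wedge\mathbb{U}(d)$ and $\mathbb{R}(a,d)=\mathbb{R}(d,a)$). Then the upper approximation operator $\overline{\mathbb{R}}(Q)(o)=\bigvee_{d\in X}\big(\mathbb{R}(d,o)\circledast(\mathbb{U}(d)\rightarrow Q(d))\big)$ is self-adjoint with respect to the inner product $\mathbb{I}(M,Q)=\bigvee_{d\in X}\big(M(d)\circledast(\mathbb{U}(d)\rightarrow Q(d))\big)$: for all $M,Q\in P(\mathbb{U})$, $\mathbb{I}(M,\overline{\mathbb{R}}(Q))=\mathbb{I}(Q,\overline{\mathbb{R}}(M))$. -/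
/-!
Divisibility gives `m ⊛ (u → q) = q ⊛ (u → m)` whenever `m, q ≤ u`: both sides equal
`(u ⊛ (u → m)) ⊛ (u → q)` up to commutativity. Applied at each point `d` with `m = M d` and
`q = R̄(Q)(d) ≤ U d`, and distributing over the supremum defining `R̄(Q)(d)`, this turns
`I(M, R̄(Q))` into `⨆ d e, R(e, d) ⊛ (U e → Q e) ⊛ (U d → M d)`, an expression that the
symmetry of `R` makes invariant under exchanging `M` and `Q`.
-/

namespace LQuantale

variable {L : Type*} [CompleteLattice L] {mul imp : L → L → L}

/-- The inner product `𝕀(M, Q)` of two `L`-subsets of the universe `U`. -/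
def innerProd (mul imp : L → L → L) {X : Type*} (U M Q : X → L) : L :=
  ⨆ d, mul (M d) (imp (U d) (Q d))

/-- The upper approximation `R̄(Q)` of an `L`-subset `Q` of the universe `U`. -/
def upperApprox (mul imp : L → L → L) {X : Type*} (U : X → L) (R : X → X → L) (Q : X → L)
    (o : X) : L :=
  ⨆ e, mul (R e o) (imp (U e) (Q e))

section Distributive

variable (hdist : ∀ (a : L) (s : Set L), mul a (sSup s) = ⨆ b ∈ s, mul a b)
include hdist

theorem mul_iSup {ι : Sort*} (a : L) (f : ι → L) : mul a (⨆ i, f i) = ⨆ i, mul a (f i) := by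
  rw [iSup, hdist, iSup_range]

theorem mul_mono_right {a b c : L} (hbc : b ≤ c) : mul a b ≤ mul a c := by
  have hsup : (⨆ i : Bool, cond i c b) = c := by
    rw [iSup_bool_eq]; exact sup_eq_left.2 hbc
  rw [← hsup, mul_iSup hdist]
  exact le_iSup (fun i : Bool => mul a (cond i c b)) false

theorem mul_le_left (hunit : ∀ a : L, mul a ⊤ = a) (a c : L) : mul a c ≤ a :=
  (mul_mono_right hdist le_top).trans_eq (hunit a)

end Distributive

theorem mul_imp_of_le (hdiv : ∀ a b : L, a ⊓ b = mul a (imp a b)) {u m : L} (hm : m ≤ u) :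
    mul u (imp u m) = m := by
  rw [← hdiv, inf_eq_right.2 hm]

theorem mul_imp_comm (hcomm : ∀ a b : L, mul a b = mul b a)
    (hassoc : ∀ a b c : L, mul (mul a b) c = mul a (mul b c))
    (hdiv : ∀ a b : L, a ⊓ b = mul a (imp a b)) {u m q : L} (hm : m ≤ u) (hq : q ≤ u) :
    mul m (imp u q) = mul q (imp u m) :=
  calc mul m (imp u q) = mul (mul u (imp u m)) (imp u q) := by rw [mul_imp_of_le hdiv hm]
    _ = mul (mul u (imp u q)) (imp u m) := by rw [hassoc, hassoc, hcomm (imp u m)]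
    _ = mul q (imp u m) := by rw [mul_imp_of_le hdiv hq]

theorem upperApprox_le {X : Type*} {U : X → L} {R : X → X → L}
    (hdist : ∀ (a : L) (s : Set L), mul a (sSup s) = ⨆ b ∈ s, mul a b)
    (hunit : ∀ a : L, mul a ⊤ = a) (hR : ∀ a d, R a d ≤ U a ⊓ U d) (Q : X → L) (d : X) :
    upperApprox mul imp U R Q d ≤ U d :=
  iSup_le fun e => (mul_le_left hdist hunit _ _).trans ((hR e d).trans inf_le_right)

theorem innerProd_upperApprox {X : Type*} {U : X → L} {R : X → X → L}
    (hcomm : ∀ a b : L, mul a b = mul b a)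
    (hassoc : ∀ a b c : L, mul (mul a b) c = mul a (mul b c))
    (hunit : ∀ a : L, mul a ⊤ = a)
    (hdist : ∀ (a : L) (s : Set L), mul a (sSup s) = ⨆ b ∈ s, mul a b)
    (hdiv : ∀ a b : L, a ⊓ b = mul a (imp a b))
    (hR : ∀ a d, R a d ≤ U a ⊓ U d) {M : X → L} (hM : ∀ x, M x ≤ U x) (Q : X → L) :
    innerProd mul imp U M (upperApprox mul imp U R Q)
      = ⨆ d, ⨆ e, mul (R e d) (mul (imp (U e) (Q e)) (imp (U d) (M d))) := by
  refine iSup_congr fun d => ?_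
  rw [mul_imp_comm hcomm hassoc hdiv (hM d) (upperApprox_le hdist hunit hR Q d), hcomm,
    upperApprox, mul_iSup hdist]
  exact iSup_congr fun e => by rw [hcomm, hassoc]

end LQuantale

open LQuantale in
theorem stmt10_general
    (L : Type*) [CompleteLattice L]
    (mul imp : L → L → L)
    (hcomm : ∀ a b : L, mul a b = mul b a)
    (hassoc : ∀ a b c : L, mul (mul a b) c = mul a (mul b c))
    (hunit : ∀ a : L, mul a ⊤ = a)
    (hdist : ∀ (a : L) (s : Set L), mul a (sSup s) = ⨆ b ∈ s, mul a b)
    (hdiv : ∀ a b : L, a ⊓ b = mul a (imp a b))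
    (X : Type*) (U : X → L)
    (R : X → X → L) (hR : ∀ a d, R a d ≤ U a ⊓ U d)
    (hsym : ∀ a d, R a d = R d a)
    (M Q : X → L) (hM : ∀ x, M x ≤ U x) (hQ : ∀ x, Q x ≤ U x) :
    (⨆ d, mul (M d) (imp (U d) (⨆ e, mul (R e d) (imp (U e) (Q e)))))
      = ⨆ d, mul (Q d) (imp (U d) (⨆ e, mul (R e d) (imp (U e) (M e)))) := by
  change innerProd mul imp U M (upperApprox mul imp U R Q)
    = innerProd mul imp U Q (upperApprox mul imp U R M)
  rw [innerProd_upperApprox hcomm hassoc hunit hdist hdiv hR hM,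
    innerProd_upperApprox hcomm hassoc hunit hdist hdiv hR hQ, iSup_comm]
  exact iSup_congr fun d => iSup_congr fun e => by rw [hsym, hcomm (imp (U d) (Q d))]

theorem stmt10
    (L : Type*) [CompleteLattice L]
    (mul imp : L → L → L)
    (hcomm : ∀ a b : L, mul a b = mul b a)
    (hassoc : ∀ a b c : L, mul (mul a b) c = mul a (mul b c))
    (hunit : ∀ a : L, mul a ⊤ = a)
    (hdist : ∀ (a : L) (s : Set L), mul a (sSup s) = ⨆ b ∈ s, mul a b)
    (himp : ∀ a b : L, imp a b = sSup {c : L | mul a c ≤ b})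
    (hdiv : ∀ a b : L, a ⊓ b = mul a (imp a b))
    (X : Type*) (U : X → L)
    (R : X → X → L) (hR : ∀ a d, R a d ≤ U a ⊓ U d)
    (hsym : ∀ a d, R a d = R d a)
    (M Q : X → L) (hM : ∀ x, M x ≤ U x) (hQ : ∀ x, Q x ≤ U x) :
    (⨆ d, mul (M d) (imp (U d) (⨆ e, mul (R e d) (imp (U e) (Q e)))))
      = ⨆ d, mul (Q d) (imp (U d) (⨆ e, mul (R e d) (imp (U e) (M e)))) :=
  stmt10_general L mul imp hcomm hassoc hunit hdist hdiv X U R hR hsym M Q hM hQ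
end

section
/- Let $L$ be a GL-quantale, $\mathbb{U}$ an $L$-universe on $X$, and define $\mathbb{H}_1:P(\mathbb{U})\to P(\mathbb{U})$ by $\mathbb{H}_1(Q)(a)=\bigvee_{b\in X}\big(Q(b)\circledast(\mathbb{U}(b)\rightarrow\mathbb{U}(a))\big)$. Then $\mathbb{H}_1$ is inflationary ($Q\le\mathbb{H}_1(Q)$) and idempotent-decreasing in the sense $\mathbb{H}_1(\mathbb{H}_1(Q))\le\mathbb{H}_1(Q)$, for all $Q\in P(\mathbb{U})$. -/
/-!
`H₁ Q a = ⨆ b, Q b ⊛ R b a` with `R b a = 𝕌 b → 𝕌 a`. This relation is reflexive (`R a a = ⊤`,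
so `H₁` is inflationary) and transitive (`R c b ⊛ R b a ≤ R c a`, so by associativity and
distributivity of `⊛` over joins, `H₁ ∘ H₁ ≤ H₁`).
-/

namespace QuantaleOps

variable {L : Type*} [CompleteLattice L] {mul imp : L → L → L}

section Distrib

variable (hdist : ∀ (a : L) (s : Set L), mul a (sSup s) = ⨆ b ∈ s, mul a b)
include hdist

theorem mul_iSup {ι : Sort*} (c : L) (f : ι → L) : mul c (⨆ i, f i) = ⨆ i, mul c (f i) := by
  rw [iSup, hdist, iSup_range]

theorem mul_le_mul_left {c x y : L} (hxy : x ≤ y) : mul c x ≤ mul c y := by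
  have hpair : sSup ({x, y} : Set L) = y := by simp [hxy]
  calc mul c x ≤ ⨆ b ∈ ({x, y} : Set L), mul c b := le_biSup _ (by simp)
    _ = mul c y := by rw [← hdist, hpair]

theorem mul_imp_le (himp : ∀ a b : L, imp a b = sSup {c : L | mul a c ≤ b}) (a b : L) :
    mul a (imp a b) ≤ b := by
  rw [himp, hdist]
  exact iSup₂_le fun _ hc => hc

end Distrib

theorem le_imp_of_mul_le (himp : ∀ a b : L, imp a b = sSup {c : L | mul a c ≤ b}) {a b c : L}
    (h : mul a c ≤ b) : c ≤ imp a b := by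
  rw [himp]
  exact le_sSup h

theorem imp_self (hunit : ∀ a : L, mul a ⊤ = a)
    (himp : ∀ a b : L, imp a b = sSup {c : L | mul a c ≤ b}) (a : L) : imp a a = ⊤ :=
  top_unique <| le_imp_of_mul_le himp (hunit a).le

variable (hcomm : ∀ a b : L, mul a b = mul b a)
  (hassoc : ∀ a b c : L, mul (mul a b) c = mul a (mul b c))
  (hdist : ∀ (a : L) (s : Set L), mul a (sSup s) = ⨆ b ∈ s, mul a b)
include hcomm hassoc hdist

theorem imp_mul_imp_le (himp : ∀ a b : L, imp a b = sSup {c : L | mul a c ≤ b}) (a b c : L) :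
    mul (imp a b) (imp b c) ≤ imp a c := by
  refine le_imp_of_mul_le himp ?_
  calc mul a (mul (imp a b) (imp b c)) = mul (imp b c) (mul a (imp a b)) := by
        rw [← hassoc, hcomm]
    _ ≤ mul (imp b c) b := mul_le_mul_left hdist (mul_imp_le hdist himp a b)
    _ = mul b (imp b c) := hcomm _ _
    _ ≤ c := mul_imp_le hdist himp b c

theorem iSup_iSup_mul_le {X : Type*} (R : X → X → L)
    (htrans : ∀ a b c, mul (R a b) (R b c) ≤ R a c) (Q : X → L) (a : X) :
    ⨆ b, mul (⨆ c, mul (Q c) (R c b)) (R b a) ≤ ⨆ c, mul (Q c) (R c a) := by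
  refine iSup_le fun b => ?_
  rw [hcomm, mul_iSup hdist]
  refine iSup_le fun c => le_iSup_of_le c ?_
  calc mul (R b a) (mul (Q c) (R c b)) = mul (Q c) (mul (R c b) (R b a)) := by
        rw [hcomm, hassoc]
    _ ≤ mul (Q c) (R c a) := mul_le_mul_left hdist (htrans c b a)

end QuantaleOps

open QuantaleOps in
theorem stmt14_general
    (L : Type*) [CompleteLattice L]
    (mul imp : L → L → L)
    (hcomm : ∀ a b : L, mul a b = mul b a)
    (hassoc : ∀ a b c : L, mul (mul a b) c = mul a (mul b c))
    (hunit : ∀ a : L, mul a ⊤ = a)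
    (hdist : ∀ (a : L) (s : Set L), mul a (sSup s) = ⨆ b ∈ s, mul a b)
    (himp : ∀ a b : L, imp a b = sSup {c : L | mul a c ≤ b})
    (X : Type*) (U : X → L)
    (H1 : (X → L) → (X → L))
    (hH1 : ∀ (Q : X → L) (a : X), H1 Q a = ⨆ b, mul (Q b) (imp (U b) (U a)))
    (Q : X → L) :
    (∀ a, Q a ≤ H1 Q a) ∧ (∀ a, H1 (H1 Q) a ≤ H1 Q a) := by
  constructor
  · intro a
    rw [hH1]
    refine le_iSup_of_le a ?_
    rw [imp_self hunit himp, hunit]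
  · intro a
    simp only [hH1]
    exact iSup_iSup_mul_le hcomm hassoc hdist _
      (fun a b c => imp_mul_imp_le hcomm hassoc hdist himp (U a) (U b) (U c)) Q a

theorem stmt14
    (L : Type*) [CompleteLattice L]
    (mul imp : L → L → L)
    (hcomm : ∀ a b : L, mul a b = mul b a)
    (hassoc : ∀ a b c : L, mul (mul a b) c = mul a (mul b c))
    (hunit : ∀ a : L, mul a ⊤ = a)
    (hdist : ∀ (a : L) (s : Set L), mul a (sSup s) = ⨆ b ∈ s, mul a b)
    (himp : ∀ a b : L, imp a b = sSup {c : L | mul a c ≤ b})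
    (hdiv : ∀ a b : L, a ⊓ b = mul a (imp a b))
    (X : Type*) (U : X → L)
    (H1 : (X → L) → (X → L))
    (hH1 : ∀ (Q : X → L) (a : X), H1 Q a = ⨆ b, mul (Q b) (imp (U b) (U a)))
    (Q : X → L) (hQ : ∀ x, Q x ≤ U x) :
    (∀ a, Q a ≤ H1 Q a) ∧ (∀ a, H1 (H1 Q) a ≤ H1 Q a) :=
  stmt14_general L mul imp hcomm hassoc hunit hdist himp X U H1 hH1 Q
end

section
/- Let $L$ be a complete MV-algebra, $\mathbb{U}$ an $L$-universe on $X$, and for $W\in P(\mathbb{U})$ define the pseudo-complement $\neg W\in P(\mathbb{U})$ by $\neg W(d)=\mathbb{U}(d)\circledast(W(d)\rightarrow 0)$. Then: (a) $\neg\neg W = W$ for all $W\in P(\mathbb{U})$; and (b) $\mathbb{U}(b)\rightarrow\neg W(b) = W(b)\rightarrow 0$ for all $b\in X$. -/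
/-!
Residuation makes `mul a` left adjoint to `imp a`, so `imp (mul a b) = imp a ∘ imp b`; with double
negation this gives `¬(a ⊛ ¬b) = a → b`. For `W ≤ U`, divisibility turns `U ⊛ (U → W)` into `U ⊓ W = W`,
which is (a), and (b) is the same identity applied to `¬W` followed by (a).
-/

namespace CompleteResiduated

variable {L : Type*} [CompleteLattice L] {mul imp : L → L → L}

theorem galoisConnection_mul_imp
    (hdist : ∀ (a : L) (s : Set L), mul a (sSup s) = ⨆ b ∈ s, mul a b)
    (himp : ∀ a b : L, imp a b = sSup {c : L | mul a c ≤ b}) (a : L) :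
    GaloisConnection (mul a) (imp a) := by
  intro c b
  refine ⟨fun h => himp a b ▸ le_sSup h, fun h => ?_⟩
  set s := {c : L | mul a c ≤ b}
  have hins : sSup (insert c s) = sSup s := by
    rw [sSup_insert, sup_eq_right.mpr (himp a b ▸ h)]
  calc mul a c ≤ ⨆ x ∈ insert c s, mul a x := le_iSup₂_of_le c (Set.mem_insert c s) le_rfl
    _ = ⨆ x ∈ s, mul a x := by rw [← hdist, hins, hdist]
    _ ≤ b := iSup₂_le fun _ hx => hx

theorem imp_mul_eq_imp_imp
    (hcomm : ∀ a b : L, mul a b = mul b a)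
    (hassoc : ∀ a b c : L, mul (mul a b) c = mul a (mul b c))
    (hgc : ∀ a : L, GaloisConnection (mul a) (imp a)) (a b c : L) :
    imp (mul a b) c = imp a (imp b c) :=
  eq_of_forall_le_iff fun x => by
    rw [← (hgc _).le_iff_le, ← (hgc _).le_iff_le, ← (hgc _).le_iff_le, hcomm a b, hassoc]

theorem mul_imp_of_le (hdiv : ∀ a b : L, a ⊓ b = mul a (imp a b)) {a b : L} (h : b ≤ a) :
    mul a (imp a b) = b := by
  rw [← hdiv, inf_eq_right.mpr h]

variable (hcomm : ∀ a b : L, mul a b = mul b a)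
    (hassoc : ∀ a b c : L, mul (mul a b) c = mul a (mul b c))
    (hdist : ∀ (a : L) (s : Set L), mul a (sSup s) = ⨆ b ∈ s, mul a b)
    (himp : ∀ a b : L, imp a b = sSup {c : L | mul a c ≤ b})
    (hdiv : ∀ a b : L, a ⊓ b = mul a (imp a b))
    (hdneg : ∀ g : L, imp (imp g ⊥) ⊥ = g)
include hcomm hassoc hdist himp hdneg

theorem imp_mul_imp_bot_bot (a b : L) : imp (mul a (imp b ⊥)) ⊥ = imp a b := by
  rw [imp_mul_eq_imp_imp hcomm hassoc (galoisConnection_mul_imp hdist himp), hdneg]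

include hdiv

theorem pseudoCompl_pseudoCompl {u w : L} (h : w ≤ u) :
    mul u (imp (mul u (imp w ⊥)) ⊥) = w := by
  rw [imp_mul_imp_bot_bot hcomm hassoc hdist himp hdneg, mul_imp_of_le hdiv h]

theorem imp_pseudoCompl {u w : L} (h : w ≤ u) :
    imp u (mul u (imp w ⊥)) = imp w ⊥ := by
  rw [← imp_mul_imp_bot_bot hcomm hassoc hdist himp hdneg u,
    pseudoCompl_pseudoCompl hcomm hassoc hdist himp hdiv hdneg h]

end CompleteResiduated

theorem stmt17_general
    (L : Type*) [CompleteLattice L]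
    (mul imp : L → L → L)
    (hcomm : ∀ a b : L, mul a b = mul b a)
    (hassoc : ∀ a b c : L, mul (mul a b) c = mul a (mul b c))
    (hdist : ∀ (a : L) (s : Set L), mul a (sSup s) = ⨆ b ∈ s, mul a b)
    (himp : ∀ a b : L, imp a b = sSup {c : L | mul a c ≤ b})
    (hdiv : ∀ a b : L, a ⊓ b = mul a (imp a b))
    (hdneg : ∀ g : L, imp (imp g ⊥) ⊥ = g)
    (X : Type*) (U : X → L)
    (W : X → L) (hW : ∀ x, W x ≤ U x) :
    (∀ d, mul (U d) (imp (mul (U d) (imp (W d) ⊥)) ⊥) = W d) ∧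
    (∀ b, imp (U b) (mul (U b) (imp (W b) ⊥)) = imp (W b) ⊥) :=
  ⟨fun d => CompleteResiduated.pseudoCompl_pseudoCompl hcomm hassoc hdist himp hdiv hdneg (hW d),
    fun b => CompleteResiduated.imp_pseudoCompl hcomm hassoc hdist himp hdiv hdneg (hW b)⟩

theorem stmt17
    (L : Type*) [CompleteLattice L]
    (mul imp : L → L → L)
    (hcomm : ∀ a b : L, mul a b = mul b a)
    (hassoc : ∀ a b c : L, mul (mul a b) c = mul a (mul b c))
    (hunit : ∀ a : L, mul a ⊤ = a)
    (hdist : ∀ (a : L) (s : Set L), mul a (sSup s) = ⨆ b ∈ s, mul a b)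
    (himp : ∀ a b : L, imp a b = sSup {c : L | mul a c ≤ b})
    (hdiv : ∀ a b : L, a ⊓ b = mul a (imp a b))
    (hdneg : ∀ g : L, imp (imp g ⊥) ⊥ = g)
    (X : Type*) (U : X → L)
    (W : X → L) (hW : ∀ x, W x ≤ U x) :
    (∀ d, mul (U d) (imp (mul (U d) (imp (W d) ⊥)) ⊥) = W d) ∧
    (∀ b, imp (U b) (mul (U b) (imp (W b) ⊥)) = imp (W b) ⊥) :=
  stmt17_general L mul imp hcomm hassoc hdist himp hdiv hdneg X U W hW
end

section
/- Let $L$ be a complete MV-algebra, $X$ nonempty, and $\mathbb{U}:X\to L$ a constant $L$-universe (i.e. $\mathbb{U}(b)=\mathbb{U}(c)$ for all $b,c\in X$). Define the outer product $\mathbb{O}(M,Q)=\bigwedge_{b\in X}\big(\mathbb{U}(b)\circledast(\neg M(b)\rightarrow Q(b))\big)$ for $M,Q\in P(\mathbb{U})$, where $\neg M(b)=\mathbb{U}(b)\circledast(M(b)\rightarrow 0)$, and set $\mathbb{U}_{X-\{b\}}(x)=\mathbb{U}(x)$ for $x\ne b$ and $0$ for $x=b$. Then for every $Q\in P(\mathbb{U})$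 and $b\in X$: $\mathbb{O}(\mathbb{U}_{X-\{b\}}, Q) = Q(b)$. -/
/-! At `x = b` the negated complement is `U b ⊛ (⊥ → ⊥) = U b`, so by divisibility the term is
`U b ∧ Q b = Q b`. At `x ≠ b` it is `U x ⊛ (U x → ⊥) = U x ∧ ⊥ = ⊥`, and `⊥ → Q x = ⊤` makes
the term `U x`, which dominates `Q b` because `U` is constant. -/

section Residuated

variable {L : Type*} [CompleteLattice L] {mul imp : L → L → L}

theorem mul_bot_of_sSup_distrib (hdist : ∀ (a : L) (s : Set L), mul a (sSup s) = ⨆ b ∈ s, mul a b)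
    (a : L) : mul a ⊥ = ⊥ := by
  simpa using hdist a ∅

theorem mul_mono_of_sSup_distrib (hdist : ∀ (a : L) (s : Set L), mul a (sSup s) = ⨆ b ∈ s, mul a b)
    (a : L) : Monotone (mul a) := by
  intro c d hcd
  have hpair := hdist a {c, d}
  rw [sSup_pair, sup_eq_right.mpr hcd, iSup_insert, iSup_singleton] at hpair
  exact hpair ▸ le_sup_left

theorem bot_mul_of_sSup_distrib (hunit : ∀ a : L, mul a ⊤ = a)
    (hdist : ∀ (a : L) (s : Set L), mul a (sSup s) = ⨆ b ∈ s, mul a b) (c : L) : mul ⊥ c = ⊥ :=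
  le_bot_iff.mp <| (mul_mono_of_sSup_distrib hdist ⊥ le_top).trans_eq (hunit ⊥)

theorem bot_imp_eq_top (hunit : ∀ a : L, mul a ⊤ = a)
    (hdist : ∀ (a : L) (s : Set L), mul a (sSup s) = ⨆ b ∈ s, mul a b)
    (himp : ∀ a b : L, imp a b = sSup {c : L | mul a c ≤ b}) (q : L) : imp ⊥ q = ⊤ := by
  rw [himp, eq_top_iff]
  exact le_sSup (by simp [bot_mul_of_sSup_distrib hunit hdist])

variable (hunit : ∀ a : L, mul a ⊤ = a)
  (hdist : ∀ (a : L) (s : Set L), mul a (sSup s) = ⨆ b ∈ s, mul a b)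
  (himp : ∀ a b : L, imp a b = sSup {c : L | mul a c ≤ b})
  (hdiv : ∀ a b : L, a ⊓ b = mul a (imp a b))
include hunit hdist himp hdiv

theorem mul_imp_mul_bot_imp_bot {u q : L} (hqu : q ≤ u) :
    mul u (imp (mul u (imp ⊥ ⊥)) q) = q := by
  rw [bot_imp_eq_top hunit hdist himp, hunit, ← hdiv, inf_eq_right.mpr hqu]

theorem mul_imp_mul_imp_bot (u q : L) : mul u (imp (mul u (imp u ⊥)) q) = u := by
  rw [← hdiv, inf_bot_eq, bot_imp_eq_top hunit hdist himp, hunit]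

end Residuated

theorem stmt18_general
    (L : Type*) [CompleteLattice L]
    (mul imp : L → L → L)
    (hunit : ∀ a : L, mul a ⊤ = a)
    (hdist : ∀ (a : L) (s : Set L), mul a (sSup s) = ⨆ b ∈ s, mul a b)
    (himp : ∀ a b : L, imp a b = sSup {c : L | mul a c ≤ b})
    (hdiv : ∀ a b : L, a ⊓ b = mul a (imp a b))
    (X : Type*) [DecidableEq X] (U : X → L) (hconst : ∀ b c : X, U b = U c)
    (Q : X → L) (hQ : ∀ x, Q x ≤ U x) (b : X) :
    (⨅ x, mul (U x) (imp (mul (U x) (imp (if x = b then ⊥ else U x) ⊥)) (Q x)))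
      = Q b := by
  have hterm_self : mul (U b) (imp (mul (U b) (imp ⊥ ⊥)) (Q b)) = Q b :=
    mul_imp_mul_bot_imp_bot hunit hdist himp hdiv (hQ b)
  refine le_antisymm (iInf_le_of_le b (by simpa using hterm_self.le)) (le_iInf fun x => ?_)
  by_cases hx : x = b
  · subst hx
    simpa using hterm_self.ge
  · rw [if_neg hx, mul_imp_mul_imp_bot hunit hdist himp hdiv, ← hconst b x]
    exact hQ b

theorem stmt18
    (L : Type*) [CompleteLattice L]
    (mul imp : L → L → L)
    (hcomm : ∀ a b : L, mul a b = mul b a)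
    (hassoc : ∀ a b c : L, mul (mul a b) c = mul a (mul b c))
    (hunit : ∀ a : L, mul a ⊤ = a)
    (hdist : ∀ (a : L) (s : Set L), mul a (sSup s) = ⨆ b ∈ s, mul a b)
    (himp : ∀ a b : L, imp a b = sSup {c : L | mul a c ≤ b})
    (hdiv : ∀ a b : L, a ⊓ b = mul a (imp a b))
    (hdneg : ∀ g : L, imp (imp g ⊥) ⊥ = g)
    (X : Type*) [DecidableEq X] [Nonempty X] (U : X → L) (hconst : ∀ b c : X, U b = U c)
    (Q : X → L) (hQ : ∀ x, Q x ≤ U x) (b : X) :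
    (⨅ x, mul (U x) (imp (mul (U x) (imp (if x = b then ⊥ else U x) ⊥)) (Q x)))
      = Q b :=
  stmt18_general L mul imp hunit hdist himp hdiv X U hconst Q hQ b
end
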